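/- Let X be a finite pure simplicial complex of dimension at least 2, let G be a group acting faithfully on a finite nonempty set S, let φ ∈ C¹(X;G), and let f:Y_φ→X be the projection map. Then m_f(Y_φ) = 0 if and only if φ ∈ Z¹(X;G). -/

import Mathlib

/-!
A vertex `(u, s)` of `Y_φ` fails to cover the link edge `{v, w}` of `u` exactly when
`d₁φ(u, v, w)` moves `s`: the only candidate lift is `{(v, φ(v,u)s), (w, φ(w,u)s)}`, and it
spans a triangle with `(u, s)` iff `φ(v,u)s = φ(v,w)φ(w,u)s`. In a pure complex every face,
and every edge of a vertex link, has positive weight, so `m_f(Y_φ) = 0` iff no vertex misses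
an edge, i.e. iff every `d₁φ(u, v, w)` fixes all of `S`; by faithfulness, iff `d₁φ = 1`.
-/

open Finset

variable {V : Type*} [DecidableEq V]

/-- A finite abstract simplicial complex on vertex type `V`. -/
structure SComplex (V : Type*) [DecidableEq V] where
  faces : Finset (Finset V)
  nonempty_of_mem : ∀ σ ∈ faces, σ.Nonempty
  down_closed : ∀ σ ∈ faces, ∀ τ ⊆ σ, τ.Nonempty → τ ∈ faces

namespace SComplex

/-- The set `X(k)` of `k`-dimensional simplices (cardinality `k+1`). -/
def simps (X : SComplex V) (k : ℕ) : Finset (Finset V) :=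
  X.faces.filter fun σ => σ.card = k + 1

/-- The number of vertices of a top-dimensional face. -/
def rank (X : SComplex V) : ℕ := X.faces.sup Finset.card

/-- The weight `c_X(σ)`. -/
noncomputable def weight (X : SComplex V) (σ : Finset V) : ℝ :=
  (((X.simps (X.rank - 1)).filter fun τ => σ ⊆ τ).card : ℝ) /
    ((X.rank.choose σ.card) * ((X.simps (X.rank - 1)).card))

/-- `X` is pure of dimension `n-1` : every face is contained in a face with `n` vertices. -/
def IsPureOfRank (X : SComplex V) (n : ℕ) : Prop :=
  X.faces.Nonempty ∧ ∀ σ ∈ X.faces, ∃ τ ∈ X.faces, σ ⊆ τ ∧ τ.card = n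

/-- The link `lk(X,σ)`. -/
def lk (X : SComplex V) (σ : Finset V) : SComplex V where
  faces := X.faces.filter fun η => η ∪ σ ∈ X.faces ∧ Disjoint η σ
  nonempty_of_mem := fun η hη => X.nonempty_of_mem η (mem_filter.mp hη).1
  down_closed := by
    intro η hη τ hτη hτ
    rw [mem_filter] at hη ⊢
    refine ⟨X.down_closed η hη.1 τ hτη hτ,
      X.down_closed (η ∪ σ) hη.2.1 (τ ∪ σ) (union_subset_union_left hτη) ?_,
      hη.2.2.mono_left hτη⟩
    exact hτ.mono subset_union_left

/-- The star `st(X,σ)`. -/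
def star (X : SComplex V) (σ : Finset V) : Finset (Finset V) :=
  X.faces.filter fun τ => τ ∪ σ ∈ X.faces

/-- The vertices of `X`. -/
def verts (X : SComplex V) [Fintype V] : Finset V :=
  Finset.univ.filter fun v => ({v} : Finset V) ∈ X.faces

end SComplex
section Cochains

variable {G : Type*} [Group G]

/-- `φ ∈ C¹(X;G)`: an antisymmetric `G`-valued function on ordered pairs. -/
def IsCochain (G : Type*) [Group G] (φ : V → V → G) : Prop :=
  ∀ u v : V, φ u v = (φ v u)⁻¹

/-- The coboundary `d₁φ(u,v,w) = φ(u,v)φ(v,w)φ(w,u)`. -/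
def d1 (φ : V → V → G) (u v w : V) : G := φ u v * φ v w * φ w u

/-- `φ ∈ Z¹(X;G)`: a cochain all of whose triangle equations hold. -/
def IsCocycle (X : SComplex V) (φ : V → V → G) : Prop :=
  IsCochain G φ ∧ ∀ u v w : V, ({u, v, w} : Finset V) ∈ X.simps 2 → d1 φ u v w = 1

open Classical in
/-- The norm `‖φ‖`: total weight of the support of `φ`. -/
noncomputable def norm1 (X : SComplex V) (φ : V → V → G) : ℝ :=
  ∑ e ∈ (X.simps 1).filter (fun e => ∃ u v : V, e = {u, v} ∧ φ u v ≠ 1), X.weight e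

open Classical in
/-- The norm `‖d₁φ‖`: total weight of the 2-simplices whose equation is violated. -/
noncomputable def normD1 (X : SComplex V) (φ : V → V → G) : ℝ :=
  ∑ τ ∈ (X.simps 2).filter (fun τ => ∃ u v w : V, τ = {u, v, w} ∧ d1 φ u v w ≠ 1), X.weight τ

/-- `dist(φ,ψ) = ‖φψ⁻¹‖`. -/
noncomputable def dist1 (X : SComplex V) (φ ψ : V → V → G) : ℝ :=
  norm1 X (fun u v => φ u v * (ψ u v)⁻¹)

/-- The cosystolic norm `‖φ‖_csy`: the distance from `φ` to `Z¹(X;G)`. -/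
noncomputable def csyNorm (X : SComplex V) (φ : V → V → G) : ℝ :=
  sInf {d : ℝ | ∃ ψ : V → V → G, IsCocycle X ψ ∧ d = dist1 X φ ψ}

/-- The cosystolic expansion `h₁(X;G)`. -/
noncomputable def h1 (X : SComplex V) (G : Type*) [Group G] : ℝ :=
  sInf {r : ℝ | ∃ φ : V → V → G, IsCochain G φ ∧ ¬ IsCocycle X φ ∧
    r = normD1 X φ / csyNorm X φ}

end Cochains

section Fix

variable (G : Type*) [Group G] (S : Type*) [Fintype S] [MulAction G S]

open Classical in
/-- `fix(g) = |{s ∈ S : g•s = s}|`. -/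
noncomputable def fixCard (g : G) : ℕ :=
  (Finset.univ.filter fun s : S => g • s = s).card

/-- `Fix_G(S) = max_{g ≠ 1} fix(g)`. -/
noncomputable def FixG : ℕ :=
  sSup {k : ℕ | ∃ g : G, g ≠ 1 ∧ fixCard G S g = k}

end Fix
section Ycomplex

variable {G : Type*} [Group G] {S : Type*} [Fintype S] [DecidableEq S] [MulAction G S]
variable [Fintype V]

open Classical in
/-- The complex `Y_φ` associated to a cochain `φ`, together with the projection
`Prod.fst : Y_φ → X`. -/
noncomputable def Ycomplex (X : SComplex V) (φ : V → V → G) (S : Type*)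
    [Fintype S] [DecidableEq S] [MulAction G S] : SComplex (V × S) where
  faces := Finset.univ.filter fun σ : Finset (V × S) =>
    σ.image Prod.fst ∈ X.faces ∧ (σ.image Prod.fst).card = σ.card ∧
    ∀ p ∈ σ, ∀ q ∈ σ, p.1 ≠ q.1 → p.2 = φ p.1 q.1 • q.2
  nonempty_of_mem := by
    intro σ hσ
    rw [Finset.mem_filter] at hσ
    exact Finset.image_nonempty.mp (X.nonempty_of_mem _ hσ.2.1)
  down_closed := by
    intro σ hσ τ hτσ hτ
    rw [Finset.mem_filter] at hσ ⊢
    obtain ⟨-, h1, h2, h3⟩ := hσ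
    refine ⟨Finset.mem_univ _,
      X.down_closed _ h1 _ (Finset.image_subset_image hτσ) (Finset.image_nonempty.mpr hτ),
      ?_, fun p hp q hq => h3 p (hτσ hp) q (hτσ hq)⟩
    exact Finset.card_image_iff.mpr ((Finset.card_image_iff.mp h2).mono hτσ)

end Ycomplex

section Deficiency

variable {W : Type*} [DecidableEq W] [Fintype W] [Fintype V]

open Classical in
/-- `D_f(ut)`: the edges in the link of `f(ut)` that are not covered by the image of the
link of `ut`. -/
noncomputable def Dset (Y : SComplex W) (X : SComplex V) (f : W → V) (ut : W) :
    Finset (Finset V) :=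
  ((X.lk {f ut}).simps 1).filter fun e => ¬ ∃ η ∈ (Y.lk {ut}).faces, η.image f = e

/-- The local deficiency `μ_f(ut)`. -/
noncomputable def locDef (Y : SComplex W) (X : SComplex V) (f : W → V) (ut : W) : ℝ :=
  ∑ e ∈ Dset Y X f ut, (X.lk {f ut}).weight e

open Classical in
/-- The deficiency `m_f(Y)` of a map `f : Y → X`. -/
noncomputable def deficiency (Y : SComplex W) (X : SComplex V) (f : W → V) : ℝ :=
  ∑ u ∈ X.verts, (X.weight {u} / ((Y.verts.filter fun w => f w = u).card : ℝ)) *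
    ∑ ut ∈ Y.verts.filter (fun w => f w = u), locDef Y X f ut

end Deficiency
section MapOver

variable [Fintype V]

/-- An element of `M(X;G,S)`: a surjective simplicial `|S|`-to-`1` map onto `X` whose
vertex fibers are identified with `S` and whose edge fibers are matchings given by the
action of elements of `G`. -/
structure MapOver (X : SComplex V) (G : Type*) (S : Type*) [Group G] [Fintype S]
    [DecidableEq S] [MulAction G S] [Fintype V] where
  Y : SComplex (V × S)
  simplicial : ∀ τ ∈ Y.faces, τ.image Prod.fst ∈ X.faces
  injOnFaces : ∀ τ ∈ Y.faces, (τ.image Prod.fst).card = τ.card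
  surj : ∀ σ ∈ X.faces, ∃ τ ∈ Y.faces, τ.image Prod.fst = σ
  fiber : ∀ p : V × S, ({p} : Finset (V × S)) ∈ Y.faces ↔ ({p.1} : Finset V) ∈ X.faces
  edges : ∀ u v : V, ({u, v} : Finset V) ∈ X.simps 1 → ∃ g : G,
    ∀ s t : S, (({(u, s), (v, t)} : Finset (V × S)) ∈ Y.faces ↔ s = g • t)

variable {G : Type*} [Group G] {S : Type*} [Fintype S] [DecidableEq S] [MulAction G S]

open Classical in
/-- The set of edges of `Y` lying over a given edge of the base. -/
noncomputable def edgeFiber (Y : SComplex (V × S)) (e : Finset V) :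
    Finset (Finset (V × S)) :=
  (Y.simps 1).filter fun e' => e'.image Prod.fst = e

open Classical in
/-- The distance between two elements of `M(X;G,S)`: the weight of the set of edges of
`X` over which the two edge fibers differ. -/
noncomputable def mdist (X : SComplex V) (M₁ M₂ : MapOver X G S) : ℝ :=
  ∑ e ∈ (X.simps 1).filter (fun e => edgeFiber M₁.Y e ≠ edgeFiber M₂.Y e), X.weight e

/-- The distance from an element of `M(X;G,S)` to the set `M₀(X;G,S)` of genuine covers. -/
noncomputable def distToCovers (X : SComplex V) (M : MapOver X G S) : ℝ :=
  sInf {d : ℝ | ∃ M' : MapOver X G S, deficiency M'.Y X Prod.fst = 0 ∧ d = mdist X M M'}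

/-- The `(G,S)`-cover-stability `c(X;G,S)`. -/
noncomputable def coverStability (X : SComplex V) (G : Type*) (S : Type*) [Group G]
    [Fintype S] [DecidableEq S] [MulAction G S] : ℝ :=
  sInf {r : ℝ | ∃ M : MapOver X G S, deficiency M.Y X Prod.fst ≠ 0 ∧
    r = deficiency M.Y X Prod.fst / distToCovers X M}

end MapOver
section Paths

/-- A (possibly closed) edge path in a complex: consecutive vertices span edges. -/
def IsEdgePath (K : SComplex V) (p : List V) : Prop :=
  (∀ v ∈ p, ({v} : Finset V) ∈ K.faces) ∧
    p.Chain' fun u v => ({u, v} : Finset V) ∈ K.faces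

/-- Combinatorial homotopy of edge paths, generated by erasing repetitions and by
collapsing across simplices. -/
inductive Homotopic (K : SComplex V) : List V → List V → Prop
  | refl (p : List V) : Homotopic K p p
  | symm {p q : List V} : Homotopic K p q → Homotopic K q p
  | trans {p q r : List V} : Homotopic K p q → Homotopic K q r → Homotopic K p r
  | collapse (p q : List V) (a b c : V) (h : ({a, b, c} : Finset V) ∈ K.faces) :
      Homotopic K (p ++ a :: b :: c :: q) (p ++ a :: c :: q)
  | dedup (p q : List V) (a : V) : Homotopic K (p ++ a :: a :: q) (p ++ a :: q)

/-- `K` is connected: any two vertices are joined by an edge path. -/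
def SComplexConnected (K : SComplex V) : Prop :=
  ∀ u v : V, ({u} : Finset V) ∈ K.faces → ({v} : Finset V) ∈ K.faces →
    ∃ p : List V, IsEdgePath K p ∧ p.head? = some u ∧ p.getLast? = some v

/-- `K` is simply connected: connected, and every closed edge path is null-homotopic. -/
def SimplyConnected (K : SComplex V) : Prop :=
  SComplexConnected K ∧
    ∀ (p : List V) (a : V), IsEdgePath K p → p.head? = some a → p.getLast? = some a →
      Homotopic K p [a]

end Paths

section OrderComplex

open Classical in
/-- The order complex of `L ∖ {⊥, ⊤}`: simplices are the nonempty chains avoiding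
`⊥` and `⊤`. -/
noncomputable def orderComplex (L : Type*) [Lattice L] [BoundedOrder L] [Fintype L]
    [DecidableEq L] : SComplex L where
  faces := Finset.univ.filter fun σ : Finset L =>
    σ.Nonempty ∧ (∀ x ∈ σ, x ≠ ⊥ ∧ x ≠ ⊤) ∧ ∀ x ∈ σ, ∀ y ∈ σ, x ≤ y ∨ y ≤ x
  nonempty_of_mem := fun σ hσ => (Finset.mem_filter.mp hσ).2.1
  down_closed := by
    intro σ hσ τ hτσ hτ
    rw [Finset.mem_filter] at hσ ⊢
    exact ⟨Finset.mem_univ _, hτ, fun x hx => hσ.2.2.1 x (hτσ hx),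
      fun x hx y hy => hσ.2.2.2 x (hτσ hx) y (hτσ hy)⟩

end OrderComplex
section Building

variable (F : Type*) [Field F] [Fintype F]

noncomputable instance : Fintype (Submodule F (Fin 4 → F)) := by
  have : Finite (Submodule F (Fin 4 → F)) :=
    Finite.of_injective (fun N => (N : Set (Fin 4 → F))) SetLike.coe_injective
  exact Fintype.ofFinite _

noncomputable instance : DecidableEq (Submodule F (Fin 4 → F)) := Classical.decEq _

/-- The spherical building `A₃(F_q)`: the order complex of the poset of nontrivial proper
linear subspaces of `F_q⁴`. -/
noncomputable def A3 : SComplex (Submodule F (Fin 4 → F)) :=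
  orderComplex (Submodule F (Fin 4 → F))

end Building
section FixEdge

variable {G : Type*} [Group G]

open Classical in
/-- The value `fix(d₁φ(u,v₁,v₂))` for an unordered edge `e = {v₁,v₂}` of the link of `u`
(well defined for cochains, since `fix` is invariant under inversion and conjugation). -/
noncomputable def fixEdge (S : Type*) [Fintype S] [MulAction G S] (φ : V → V → G)
    (u : V) (e : Finset V) : ℕ :=
  sSup {k : ℕ | ∃ v₁ ∈ e, ∃ v₂ ∈ e, v₁ ≠ v₂ ∧ k = fixCard G S (d1 φ u v₁ v₂)}

end FixEdge

namespace SComplex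

variable {X : SComplex V} {n : ℕ}

theorem IsPureOfRank.rank_eq (hX : X.IsPureOfRank n) : X.rank = n := by
  obtain ⟨⟨σ₀, hσ₀⟩, hpure⟩ := hX
  apply le_antisymm
  · refine Finset.sup_le fun σ hσ => ?_
    obtain ⟨τ, -, hστ, rfl⟩ := hpure σ hσ
    exact card_le_card hστ
  · obtain ⟨τ, hτ, -, rfl⟩ := hpure σ₀ hσ₀
    exact le_sup hτ

theorem weight_nonneg (X : SComplex V) (σ : Finset V) : 0 ≤ X.weight σ := by
  unfold weight
  positivity

theorem IsPureOfRank.weight_pos (hX : X.IsPureOfRank n) {σ : Finset V} (hσ : σ ∈ X.faces) :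
    0 < X.weight σ := by
  obtain ⟨τ, hτ, hστ, hτn⟩ := hX.2 σ hσ
  have hστn : σ.card ≤ n := hτn ▸ card_le_card hστ
  have hτtop : τ ∈ X.simps (X.rank - 1) := by
    have hσpos := (X.nonempty_of_mem σ hσ).card_pos
    rw [simps, mem_filter, hX.rank_eq]
    exact ⟨hτ, by omega⟩
  unfold weight
  rw [hX.rank_eq] at hτtop ⊢
  have hup : 0 < ((X.simps (n - 1)).filter fun τ => σ ⊆ τ).card :=
    card_pos.mpr ⟨τ, mem_filter.mpr ⟨hτtop, hστ⟩⟩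
  have hchoose := Nat.choose_pos hστn
  have htop := card_pos.mpr ⟨τ, hτtop⟩
  positivity

theorem mem_lk {σ η : Finset V} :
    η ∈ (X.lk σ).faces ↔ η ∈ X.faces ∧ η ∪ σ ∈ X.faces ∧ Disjoint η σ := by
  simp only [lk, mem_filter]

theorem IsPureOfRank.lk (hX : X.IsPureOfRank n) {σ : Finset V} (hne : (X.lk σ).faces.Nonempty) :
    (X.lk σ).IsPureOfRank (n - σ.card) := by
  refine ⟨hne, fun η hη => ?_⟩
  obtain ⟨hηX, hησ, hdisj⟩ := mem_lk.mp hη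
  obtain ⟨τ, hτ, hητ, rfl⟩ := hX.2 _ hησ
  have hστ : σ ⊆ τ := subset_union_right.trans hητ
  have hητσ : η ⊆ τ \ σ := fun x hx =>
    mem_sdiff.mpr ⟨hητ (mem_union_left _ hx), disjoint_left.mp hdisj hx⟩
  refine ⟨τ \ σ, mem_lk.mpr ⟨?_, ?_, sdiff_disjoint⟩, hητσ, card_sdiff_of_subset hστ⟩
  · exact X.down_closed τ hτ _ sdiff_subset ((X.nonempty_of_mem η hηX).mono hητσ)
  · rwa [sdiff_union_of_subset hστ]

theorem mem_verts [Fintype V] {v : V} : v ∈ X.verts ↔ ({v} : Finset V) ∈ X.faces := by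
  simp [verts]

theorem mem_lk_singleton {x : V} {η : Finset V} :
    η ∈ (X.lk {x}).faces ↔ η ∈ X.faces ∧ insert x η ∈ X.faces ∧ x ∉ η := by
  rw [mem_lk, union_comm, ← insert_eq, disjoint_singleton_right]

theorem pair_mem_lk_simps_one_iff {u v w : V} :
    ({v, w} : Finset V) ∈ (X.lk {u}).simps 1 ↔ ({u, v, w} : Finset V) ∈ X.simps 2 := by
  simp only [simps, mem_filter, mem_lk_singleton]
  constructor
  · rintro ⟨⟨-, hface, hu⟩, hvw⟩
    exact ⟨hface, by rw [card_insert_of_notMem hu, hvw]⟩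
  · rintro ⟨hface, hcard⟩
    have hu : u ∉ ({v, w} : Finset V) := fun hu => by
      rw [insert_eq_of_mem hu] at hcard
      exact absurd (hcard ▸ card_le_two) (by omega)
    rw [card_insert_of_notMem hu] at hcard
    exact ⟨⟨X.down_closed _ hface _ (subset_insert _ _) (insert_nonempty _ _), hface, hu⟩,
      by omega⟩

end SComplex

section Deficiency

variable {W : Type*} [DecidableEq W] {Y : SComplex W} {X : SComplex V} {f : W → V} {n : ℕ}

theorem mem_lk_of_mem_Dset {w : W} {e : Finset V} (he : e ∈ Dset Y X f w) :
    e ∈ (X.lk {f w}).faces :=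
  (mem_filter.mp (mem_filter.mp he).1).1

theorem locDef_nonneg (w : W) : 0 ≤ locDef Y X f w :=
  sum_nonneg fun e _ => SComplex.weight_nonneg _ e

theorem locDef_eq_zero_iff (hX : X.IsPureOfRank n) {w : W} :
    locDef Y X f w = 0 ↔ Dset Y X f w = ∅ := by
  rw [locDef, sum_eq_zero_iff_of_nonneg fun e _ => SComplex.weight_nonneg _ e,
    eq_empty_iff_forall_notMem]
  refine forall₂_congr fun e he => iff_false_intro (ne_of_gt ?_)
  have heLk := mem_lk_of_mem_Dset he
  exact (hX.lk ⟨e, heLk⟩).weight_pos heLk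

theorem mem_verts_of_mem_Dset [Fintype V] {w : W} {e : Finset V} (he : e ∈ Dset Y X f w) :
    f w ∈ X.verts := by
  obtain ⟨-, hinsert, -⟩ := SComplex.mem_lk_singleton.mp (mem_lk_of_mem_Dset he)
  exact SComplex.mem_verts.mpr
    (X.down_closed _ hinsert _ (singleton_subset_iff.mpr (mem_insert_self _ _))
      (singleton_nonempty _))

theorem deficiency_eq_zero_iff_forall_locDef_eq_zero [Fintype W] [Fintype V]
    (hX : X.IsPureOfRank n) :
    deficiency Y X f = 0 ↔ ∀ w ∈ Y.verts, f w ∈ X.verts → locDef Y X f w = 0 := by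
  have hterm : ∀ u ∈ X.verts, (X.weight {u} / ((Y.verts.filter fun w => f w = u).card : ℝ)) *
      ∑ w ∈ Y.verts.filter (fun w => f w = u), locDef Y X f w = 0 ↔
      ∀ w ∈ Y.verts, f w = u → locDef Y X f w = 0 := by
    intro u hu
    rw [mul_eq_zero, div_eq_zero_iff, Nat.cast_eq_zero, card_eq_zero, filter_eq_empty_iff,
      sum_eq_zero_iff_of_nonneg fun w _ => locDef_nonneg w]
    simp only [(hX.weight_pos (SComplex.mem_verts.mp hu)).ne', false_or, mem_filter, and_imp]
    exact ⟨fun h => h.elim (fun hempty w hw hwu => absurd hwu (hempty hw)) id, Or.inr⟩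
  rw [deficiency, sum_eq_zero_iff_of_nonneg fun u _ => mul_nonneg
    (div_nonneg (SComplex.weight_nonneg _ _) (Nat.cast_nonneg _))
    (sum_nonneg fun w _ => locDef_nonneg w)]
  exact ⟨fun h w hw hu => (hterm _ hu).mp (h _ hu) w hw rfl,
    fun h u hu => (hterm u hu).mpr fun w hw hwu => h w hw (hwu ▸ hu)⟩

theorem deficiency_eq_zero_iff_forall_Dset_eq_empty [Fintype W] [Fintype V]
    (hX : X.IsPureOfRank n) :
    deficiency Y X f = 0 ↔ ∀ w ∈ Y.verts, Dset Y X f w = ∅ := by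
  rw [deficiency_eq_zero_iff_forall_locDef_eq_zero hX]
  refine forall₂_congr fun w _ => ?_
  rw [locDef_eq_zero_iff hX]
  refine ⟨fun h => eq_empty_iff_forall_notMem.mpr fun e he => ?_, fun h _ => h⟩
  rw [h (mem_verts_of_mem_Dset he)] at he
  exact notMem_empty e he

end Deficiency

theorem IsCochain.d1_smul_eq_self_iff {V G S : Type*} [Group G] [MulAction G S] {φ : V → V → G}
    (hφ : IsCochain G φ) {u v w : V} {s : S} :
    d1 φ u v w • s = s ↔ φ v u • s = φ v w • φ w u • s := by
  rw [d1, mul_smul, mul_smul, hφ u v, inv_smul_eq_iff, eq_comm]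

section Ycomplex

variable {G : Type*} [Group G] {S : Type*} [Fintype S] [DecidableEq S] [MulAction G S]
  [Fintype V] {X : SComplex V} {φ : V → V → G}

theorem mem_Ycomplex_faces {σ : Finset (V × S)} :
    σ ∈ (Ycomplex X φ S).faces ↔ σ.image Prod.fst ∈ X.faces ∧
      (σ.image Prod.fst).card = σ.card ∧
      ∀ p ∈ σ, ∀ q ∈ σ, p.1 ≠ q.1 → p.2 = φ p.1 q.1 • q.2 := by
  simp only [Ycomplex, mem_filter, mem_univ, true_and]

theorem singleton_mem_Ycomplex_iff {p : V × S} :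
    {p} ∈ (Ycomplex X φ S).faces ↔ {p.1} ∈ X.faces := by
  simp only [mem_Ycomplex_faces, image_singleton, card_singleton, mem_singleton,
    forall_eq, ne_eq, not_true_eq_false, false_imp_iff, and_true]

theorem insert_mem_Ycomplex (hφ : IsCochain G φ) {τ : Finset (V × S)} {p : V × S}
    (hτ : τ ∈ (Ycomplex X φ S).faces) (hp : p.1 ∉ τ.image Prod.fst)
    (hface : insert p.1 (τ.image Prod.fst) ∈ X.faces)
    (hcompat : ∀ q ∈ τ, p.2 = φ p.1 q.1 • q.2) :
    insert p τ ∈ (Ycomplex X φ S).faces := by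
  obtain ⟨-, hcard, hpair⟩ := mem_Ycomplex_faces.mp hτ
  have hpτ : p ∉ τ := fun h => hp (mem_image_of_mem _ h)
  refine mem_Ycomplex_faces.mpr ⟨by rwa [image_insert], ?_, ?_⟩
  · rw [image_insert, card_insert_of_notMem hp, card_insert_of_notMem hpτ, hcard]
  simp only [mem_insert, forall_eq_or_imp, ne_eq, not_true_eq_false, false_imp_iff, true_and]
  refine ⟨fun q hq _ => hcompat q hq, fun q hq => ⟨fun _ => ?_, hpair q hq⟩⟩
  rw [hcompat q hq, hφ q.1 p.1, inv_smul_smul]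

theorem mem_verts_Ycomplex {u : V} {s : S} :
    (u, s) ∈ (Ycomplex X φ S).verts ↔ {u} ∈ X.faces := by
  rw [SComplex.mem_verts, singleton_mem_Ycomplex_iff]

theorem exists_lift_mem_lk_Ycomplex_iff (hφ : IsCochain G φ) {u v w : V}
    (he : ({v, w} : Finset V) ∈ (X.lk {u}).simps 1) (s : S) :
    (∃ η ∈ ((Ycomplex X φ S).lk {(u, s)}).faces, η.image Prod.fst = {v, w}) ↔
      d1 φ u v w • s = s := by
  obtain ⟨⟨hvwX, huvwX, hu⟩, hcard⟩ := mem_filter.mp he |>.imp_left SComplex.mem_lk_singleton.mp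
  have hvw : v ≠ w := card_pair_eq_two_iff.mp hcard
  have huv : u ≠ v := fun h => hu (by simp [h])
  have huw : u ≠ w := fun h => hu (by simp [h])
  rw [hφ.d1_smul_eq_self_iff]
  constructor
  · rintro ⟨η, hη, himage⟩
    have hpair := (mem_Ycomplex_faces.mp (SComplex.mem_lk_singleton.mp hη).2.1).2.2
    obtain ⟨p, hp, rfl⟩ := mem_image.mp (himage ▸ mem_insert_self v {w})
    obtain ⟨q, hq, rfl⟩ := mem_image.mp (himage ▸ mem_insert_of_mem (mem_singleton_self w))
    have hpu := hpair p (mem_insert_of_mem hp) (u, s) (mem_insert_self _ _) (Ne.symm huv)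
    have hqu := hpair q (mem_insert_of_mem hq) (u, s) (mem_insert_self _ _) (Ne.symm huw)
    rw [← hpu, ← hqu]
    exact hpair p (mem_insert_of_mem hp) q (mem_insert_of_mem hq) hvw
  · intro h
    have hedge : ({(v, φ v u • s), (w, φ w u • s)} : Finset (V × S)) ∈
        (Ycomplex X φ S).faces := by
      refine insert_mem_Ycomplex hφ (singleton_mem_Ycomplex_iff.mpr ?_) (by simpa using hvw)
        (by simpa using hvwX) (by simpa using h)
      exact X.down_closed _ hvwX _ (by simp) (singleton_nonempty w)
    refine ⟨_, SComplex.mem_lk_singleton.mpr ⟨hedge, ?_, by simp [huv, huw]⟩, by simp⟩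
    refine insert_mem_Ycomplex hφ hedge (by simp [huv, huw]) (by simpa using huvwX) ?_
    simp only [mem_insert, mem_singleton, forall_eq_or_imp, forall_eq, hφ u v, hφ u w,
      inv_smul_smul, and_self]

theorem Dset_Ycomplex_eq_empty_iff (hφ : IsCochain G φ) (u : V) (s : S) :
    Dset (Ycomplex X φ S) X Prod.fst (u, s) = ∅ ↔
      ∀ v w, ({v, w} : Finset V) ∈ (X.lk {u}).simps 1 → d1 φ u v w • s = s := by
  rw [Dset, filter_eq_empty_iff]
  constructor
  · intro h v w he
    exact (exists_lift_mem_lk_Ycomplex_iff hφ he s).mp (not_not.mp (h he))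
  · intro h e he
    obtain ⟨v, w, -, rfl⟩ := card_eq_two.mp (mem_filter.mp he).2
    exact not_not.mpr ((exists_lift_mem_lk_Ycomplex_iff hφ he s).mpr (h v w he))

end Ycomplex

theorem deficiency_eq_zero_iff_general
    {V : Type*} [Fintype V] [DecidableEq V]
    {G : Type*} [Group G] {S : Type*} [Fintype S] [DecidableEq S]
    [MulAction G S]
    (X : SComplex V) (n : ℕ) (hpure : X.IsPureOfRank n)
    (hfaithful : ∀ g : G, g ≠ 1 → ∃ s : S, g • s ≠ s)
    (φ : V → V → G) (hφ : IsCochain G φ) :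
    deficiency (Ycomplex X φ S) X Prod.fst = 0 ↔ IsCocycle X φ := by
  rw [deficiency_eq_zero_iff_forall_Dset_eq_empty hpure, IsCocycle, and_iff_right hφ]
  simp only [Prod.forall, mem_verts_Ycomplex, Dset_Ycomplex_eq_empty_iff hφ,
    SComplex.pair_mem_lk_simps_one_iff]
  constructor
  · intro h u v w huvw
    by_contra hne
    obtain ⟨s, hs⟩ := hfaithful _ hne
    have hu : {u} ∈ X.faces :=
      X.down_closed _ (mem_filter.mp huvw).1 _ (by simp) (singleton_nonempty u)
    exact hs (h u s hu v w huvw)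
  · intro h u s _ v w huvw
    rw [h u v w huvw, one_smul]

/-- for a faithful action, `Y_φ` has zero deficiency iff `φ` is a
cocycle. -/
theorem deficiency_eq_zero_iff
    {V : Type*} [Fintype V] [DecidableEq V]
    {G : Type*} [Group G] {S : Type*} [Fintype S] [DecidableEq S] [Nonempty S]
    [MulAction G S]
    (X : SComplex V) (n : ℕ) (hn : 3 ≤ n) (hpure : X.IsPureOfRank n)
    (hfaithful : ∀ g : G, g ≠ 1 → ∃ s : S, g • s ≠ s)
    (φ : V → V → G) (hφ : IsCochain G φ) :
    deficiency (Ycomplex X φ S) X Prod.fst = 0 ↔ IsCocycle X φ :=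
  deficiency_eq_zero_iff_general X n hpure hfaithful φ hφ
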